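/- arXiv:2511.19212 — 2 statements merged into one kernel-verified Lean document; each statement's English description precedes it below -/
import Mathlib

section
/- For the 6-state VASS 𝒱 constructed from DFAs 𝒟₁, …, 𝒟ₖ in the intersection-nonemptiness reduction, the following invariant holds: in every configuration of the form p(z) reachable from the initial configuration p(u) (where u sets x_i = 1, y_i = s − 1 for all i), the counters satisfy x_i + y_i = s and x_i ≥ 1 for all i ∈ {1,…,k}. -/
/-- States of the VASS constructed from `k` DFAs with `s` states each over alphabet `A`. -/
inductive RSt (A : Type) (k s : ℕ) where
  | p : RSt A k s
  | q : RSt A k s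
  | secStart (σ : A) (i : Fin k) : RSt A k s
  | secMid (σ : A) (i : Fin k) (a : Fin s) : RSt A k s
  | secEnd (σ : A) (i : Fin k) : RSt A k s
  | chkStart (i : Fin k) : RSt A k s
  | chkEnd (i : Fin k) : RSt A k s

/-- Update vector touching only the pair of counters `x_i` (index `(i, true)`)
and `y_i` (index `(i, false)`). -/
def upd {k : ℕ} (i : Fin k) (x y : ℤ) : Fin k × Bool → ℤ :=
  fun j => if j = (i, true) then x else if j = (i, false) then y else 0

/-- Transitions of the constructed `2k`-VASS.  The DFAs are given by partial
deterministic transition functions `δ i : Fin s → A → Option (Fin s)` and final-state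
sets `F i`; state `a : Fin s` of automaton `i` is numbered `a.val + 1 ∈ {1,…,s}`. -/
inductive RTrans {A : Type} {k s : ℕ} (δ : Fin k → Fin s → A → Option (Fin s))
    (F : Fin k → Finset (Fin s)) :
    RSt A k s → (Fin k × Bool → ℤ) → RSt A k s → Prop where
  | toSec (σ : A) (h : 0 < k) :
      RTrans δ F .p 0 (.secStart σ ⟨0, h⟩)
  | secIn (σ : A) (i : Fin k) (a b : Fin s) (hab : δ i a σ = some b) :
      RTrans δ F (.secStart σ i)
        (upd i (-((a.val : ℤ) + 1)) (-((s - (a.val + 1) : ℕ) : ℤ))) (.secMid σ i a)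
  | secOut (σ : A) (i : Fin k) (a b : Fin s) (hab : δ i a σ = some b) :
      RTrans δ F (.secMid σ i a)
        (upd i ((b.val : ℤ) + 1) ((s - (b.val + 1) : ℕ) : ℤ)) (.secEnd σ i)
  | secNext (σ : A) (i : Fin k) (h : i.val + 1 < k) :
      RTrans δ F (.secEnd σ i) 0 (.secStart σ ⟨i.val + 1, h⟩)
  | secBack (σ : A) (h : 0 < k) :
      RTrans δ F (.secEnd σ ⟨k - 1, by omega⟩) 0 .p
  | toChk (h : 0 < k) :
      RTrans δ F .p 0 (.chkStart ⟨0, h⟩)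
  | chk (i : Fin k) (f : Fin s) (hf : f ∈ F i) :
      RTrans δ F (.chkStart i)
        (upd i (-((f.val : ℤ) + 1)) (-((s - (f.val + 1) : ℕ) : ℤ))) (.chkEnd i)
  | chkNext (i : Fin k) (h : i.val + 1 < k) :
      RTrans δ F (.chkEnd i) 0 (.chkStart ⟨i.val + 1, h⟩)
  | chkDone (h : 0 < k) :
      RTrans δ F (.chkEnd ⟨k - 1, by omega⟩) 0 .q

/-- One step of the constructed VASS. -/
def RStep {A : Type} {k s : ℕ} (δ : Fin k → Fin s → A → Option (Fin s))
    (F : Fin k → Finset (Fin s))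
    (c c' : RSt A k s × (Fin k × Bool → ℕ)) : Prop :=
  ∃ x, RTrans δ F c.1 x c'.1 ∧ ∀ j, (c'.2 j : ℤ) = (c.2 j : ℤ) + x j

def RReach {A : Type} {k s : ℕ} (δ : Fin k → Fin s → A → Option (Fin s))
    (F : Fin k → Finset (Fin s)) :
    RSt A k s × (Fin k × Bool → ℕ) → RSt A k s × (Fin k × Bool → ℕ) → Prop :=
  Relation.ReflTransGen (RStep δ F)

/-- The initial counter values: `x_i = 1`, `y_i = s - 1` for all `i`. -/
def initCnt (k s : ℕ) : Fin k × Bool → ℕ := fun j => if j.2 then 1 else s - 1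

/-!
Part `i` of a σ-section first removes `a + 1` tokens from `x_i` and `s - (a + 1)` from `y_i`,
`s` tokens in all. When `x_i + y_i = s` this can only fire by emptying the pair, and the second
transition of the part refills it with `b + 1` and `s - (b + 1)`. Hence at `p` and between the
parts every pair satisfies `x_i + y_i = s`, `x_i ≥ 1`, and in the middle of part `i` the pair `i`
is `(0, 0)` while all others are intact.
-/

section Upd

variable {k : ℕ} (i : Fin k) (x y : ℤ)

@[simp]
lemma upd_self_true : upd i x y (i, true) = x := by
  simp [upd]

@[simp]
lemma upd_self_false : upd i x y (i, false) = y := by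
  simp [upd]

lemma upd_of_ne {j : Fin k} (hj : j ≠ i) (b : Bool) : upd i x y (j, b) = 0 := by
  simp [upd, hj]

end Upd

section Invariant

variable {A : Type} {k s : ℕ}

def PairFull (s : ℕ) (z : Fin k × Bool → ℕ) (i : Fin k) : Prop :=
  z (i, true) + z (i, false) = s ∧ 1 ≤ z (i, true)

def PairEmpty (z : Fin k × Bool → ℕ) (i : Fin k) : Prop :=
  z (i, true) = 0 ∧ z (i, false) = 0

def ReachInv : RSt A k s × (Fin k × Bool → ℕ) → Prop
  | (.p, z) | (.secStart _ _, z) | (.secEnd _ _, z) => ∀ i, PairFull s z i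
  | (.secMid _ i _, z) => PairEmpty z i ∧ ∀ j ≠ i, PairFull s z j
  | _ => True

variable {z z' : Fin k × Bool → ℕ}

lemma counters_eq_of_add_zero (hz : ∀ j, (z' j : ℤ) = z j + (0 : Fin k × Bool → ℤ) j) : z' = z :=
  funext fun j => by simpa using hz j

lemma apply_eq_of_add_upd_of_ne {i j : Fin k} {x y : ℤ}
    (hz : ∀ j, (z' j : ℤ) = z j + upd i x y j) (hj : j ≠ i) (b : Bool) :
    z' (j, b) = z (j, b) := by
  simpa [upd_of_ne i x y hj] using hz (j, b)

lemma pairFull_iff_of_add_upd_of_ne {i j : Fin k} {x y : ℤ}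
    (hz : ∀ j, (z' j : ℤ) = z j + upd i x y j) (hj : j ≠ i) :
    PairFull s z' j ↔ PairFull s z j := by
  simp only [PairFull, apply_eq_of_add_upd_of_ne hz hj]

lemma PairFull.pairEmpty_of_remove {i : Fin k} {a : Fin s} (hi : PairFull s z i)
    (hz : ∀ j, (z' j : ℤ) = z j + upd i (-((a.val : ℤ) + 1)) (-((s - (a.val + 1) : ℕ) : ℤ)) j) :
    PairEmpty z' i := by
  have hx := hz (i, true)
  have hy := hz (i, false)
  simp only [upd_self_true, upd_self_false] at hx hy
  have := a.isLt
  unfold PairFull at hi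
  constructor <;> omega

lemma PairEmpty.pairFull_of_refill {i : Fin k} {b : Fin s} (hi : PairEmpty z i)
    (hz : ∀ j, (z' j : ℤ) = z j + upd i ((b.val : ℤ) + 1) ((s - (b.val + 1) : ℕ) : ℤ) j) :
    PairFull s z' i := by
  have hx := hz (i, true)
  have hy := hz (i, false)
  simp only [upd_self_true, upd_self_false] at hx hy
  have := b.isLt
  unfold PairEmpty at hi
  constructor <;> omega

variable {δ : Fin k → Fin s → A → Option (Fin s)} {F : Fin k → Finset (Fin s)}

lemma ReachInv.of_step {c c' : RSt A k s × (Fin k × Bool → ℕ)} (h : RStep δ F c c')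
    (hc : ReachInv c) : ReachInv c' := by
  obtain ⟨st, z⟩ := c
  obtain ⟨st', z'⟩ := c'
  obtain ⟨x, ht, hz⟩ := h
  dsimp only at ht hz
  cases ht with
  | toSec | secNext | secBack =>
    rw [counters_eq_of_add_zero hz]
    exact hc
  | secIn σ i a b =>
    refine ⟨(hc i).pairEmpty_of_remove hz, fun j hj => ?_⟩
    exact (pairFull_iff_of_add_upd_of_ne hz hj).2 (hc j)
  | secOut σ i a b =>
    intro j
    by_cases hj : j = i
    · subst hj
      exact hc.1.pairFull_of_refill hz
    · exact (pairFull_iff_of_add_upd_of_ne hz hj).2 (hc.2 j hj)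
  | toChk | chk | chkNext | chkDone => trivial

lemma ReachInv.of_reach {c c' : RSt A k s × (Fin k × Bool → ℕ)} (h : RReach δ F c c')
    (hc : ReachInv c) : ReachInv c' := by
  induction h with
  | refl => exact hc
  | tail _ hstep ih => exact ih.of_step hstep

end Invariant

/-- Invariant of the reduction: in every configuration `p(z)` reachable from the
initial configuration `p(u)`, the counters satisfy `x_i + y_i = s` and `x_i ≥ 1`. -/
theorem reduction_invariant {A : Type} {k s : ℕ}
    (δ : Fin k → Fin s → A → Option (Fin s)) (F : Fin k → Finset (Fin s))
    (hs : 0 < s)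
    (z : Fin k × Bool → ℕ)
    (h : RReach δ F (.p, initCnt k s) (.p, z)) :
    ∀ i : Fin k, z (i, true) + z (i, false) = s ∧ 1 ≤ z (i, true) := by
  have hinit : ReachInv ((.p : RSt A k s), initCnt k s) := fun _ => by
    simp only [PairFull, initCnt, if_true, Bool.false_eq_true, if_false]
    omega
  exact hinit.of_reach h
end

section
/- Correctness of the DFA-intersection-to-VASS-coverability reduction: there exists a word w over Σ accepted by all of the DFAs 𝒟₁, …, 𝒟ₖ if and only if there is a run of the constructed 2k-VASS 𝒱 from configuration p(u) to some configuration with state q, where u assigns x_i = 1 and y_i = s − 1 for each i. -/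
/-- Run of the (partial, deterministic) DFA `δi` on a word, from a given state. -/
def dfaRun {A : Type} {s : ℕ} (δi : Fin s → A → Option (Fin s)) :
    Fin s → List A → Option (Fin s)
  | q0, [] => some q0
  | q0, a :: w => (δi q0 a).bind fun q1 => dfaRun δi q1 w


/-!
Every configuration reachable from `p(u)` has the shape the construction intends, which
is captured by an invariant. At `p` the counters are `(a_i + 1, s - (a_i + 1))` for a tuple
of states `(a_i)` jointly reachable by some word. A gadget subtracting `(a + 1, s - (a + 1))`
from such a pair keeps both counters non-negative only when `a = a_i`, and then empties the
pair; hence the `σ`-section can only advance every automaton along `σ`, and the checking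
section can only be passed when every `a_i` is final. Conversely, an accepted word is
simulated letter by letter and then checked.
-/

namespace DFAReduction

variable {A : Type} {k s : ℕ}

/-- State `a` of an automaton is stored as the counter pair `(a + 1, s - (a + 1))`;
`none` stands for a pair that a gadget has emptied. -/
def encode (o : Fin k → Option (Fin s)) : Fin k × Bool → ℕ := fun jb =>
  match o jb.1 with
  | none => 0
  | some a => if jb.2 then a.val + 1 else s - (a.val + 1)

def mix (st st' : Fin k → Fin s) (n : ℕ) : Fin k → Fin s :=
  fun j => if j.val < n then st' j else st j

def checked (st : Fin k → Fin s) (n : ℕ) : Fin k → Option (Fin s) :=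
  fun j => if j.val < n then none else some (st j)

def JointlyReachable (δ : Fin k → Fin s → A → Option (Fin s)) (hs : 0 < s)
    (st : Fin k → Fin s) : Prop :=
  ∃ w : List A, ∀ i, dfaRun (δ i) ⟨0, hs⟩ w = some (st i)

lemma dfaRun_append (δi : Fin s → A → Option (Fin s)) (q₀ : Fin s) (w : List A) (σ : A) :
    dfaRun δi q₀ (w ++ [σ]) = (dfaRun δi q₀ w).bind (δi · σ) := by
  induction w generalizing q₀ with
  | nil => simp [dfaRun]
  | cons a w ih => cases h : δi q₀ a <;> simp [dfaRun, h, ih]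

lemma JointlyReachable.step {δ : Fin k → Fin s → A → Option (Fin s)} {hs : 0 < s}
    {st st' : Fin k → Fin s} (hst : JointlyReachable δ hs st) (σ : A)
    (h : ∀ j, δ j (st j) σ = some (st' j)) : JointlyReachable δ hs st' := by
  obtain ⟨w, hw⟩ := hst
  exact ⟨w ++ [σ], fun i => by rw [dfaRun_append, hw i, Option.bind_some, h i]⟩

lemma mix_zero (st st' : Fin k → Fin s) : mix st st' 0 = st := by
  funext j; simp [mix]

lemma some_comp_mix_apply_self (st st' : Fin k → Fin s) (i : Fin k) :
    (some ∘ mix st st' i.val) i = some (st i) := by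
  simp [mix]

lemma mix_of_le {st st' : Fin k → Fin s} {n : ℕ} (hn : k ≤ n) : mix st st' n = st' := by
  funext j; simp [mix, show j.val < n by omega]

lemma update_mix (st st' : Fin k → Fin s) (i : Fin k) (b : Fin s) :
    Function.update (mix st st' i.val) i b = mix st (Function.update st' i b) (i.val + 1) := by
  funext j
  by_cases hj : j = i
  · subst hj; simp [mix]
  · have : j.val ≠ i.val := Fin.val_ne_of_ne hj
    simp only [mix, Function.update_of_ne hj]
    split_ifs <;> first | rfl | omega

lemma checked_zero (st : Fin k → Fin s) : checked st 0 = some ∘ st := by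
  funext j; simp [checked]

lemma checked_apply_self (st : Fin k → Fin s) (i : Fin k) : checked st i.val i = some (st i) := by
  simp [checked]

lemma update_checked (st : Fin k → Fin s) (i : Fin k) :
    Function.update (checked st i.val) i none = checked st (i.val + 1) := by
  funext j
  by_cases hj : j = i
  · subst hj; simp [checked]
  · have : j.val ≠ i.val := Fin.val_ne_of_ne hj
    simp only [checked, Function.update_of_ne hj]
    split_ifs <;> first | rfl | omega

lemma initCnt_eq_encode (hs : 0 < s) :
    initCnt k s = encode (fun _ : Fin k => some (⟨0, hs⟩ : Fin s)) := by
  funext ⟨j, b⟩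
  cases b <;> simp [initCnt, encode]

lemma effect_zero_iff {v v' : Fin k × Bool → ℕ} :
    (∀ j, (v' j : ℤ) = v j + (0 : Fin k × Bool → ℤ) j) ↔ v' = v := by
  simp [funext_iff]

lemma effect_upd_of_ne {v v' : Fin k × Bool → ℕ} {i j : Fin k} {x y : ℤ} (hj : j ≠ i)
    (h : ∀ jb, (v' jb : ℤ) = v jb + upd i x y jb) (b : Bool) : v' (j, b) = v (j, b) := by
  have := h (j, b)
  simp only [upd, Prod.mk.injEq, hj, false_and, if_false, add_zero] at this
  exact_mod_cast this

lemma eq_of_sub_code_nonneg {a c : Fin s} {n m : ℕ}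
    (hx : (n : ℤ) = ((c.val : ℤ) + 1) + -((a.val : ℤ) + 1))
    (hy : (m : ℤ) = ((s - (c.val + 1) : ℕ) : ℤ) + -((s - (a.val + 1) : ℕ) : ℤ)) :
    a = c ∧ n = 0 ∧ m = 0 := by
  have := c.isLt; have := a.isLt
  refine ⟨Fin.ext ?_, ?_, ?_⟩ <;> omega

lemma effect_sub_code_iff {o : Fin k → Option (Fin s)} {i : Fin k} {c : Fin s}
    (ho : o i = some c) (a : Fin s) {v' : Fin k × Bool → ℕ} :
    (∀ jb, (v' jb : ℤ) = encode o jb +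
        upd i (-((a.val : ℤ) + 1)) (-((s - (a.val + 1) : ℕ) : ℤ)) jb) ↔
      a = c ∧ v' = encode (Function.update o i none) := by
  constructor
  · intro h
    have hx := h (i, true)
    have hy := h (i, false)
    simp only [upd, encode, ho, if_pos, Prod.mk.injEq, Bool.false_eq_true,
      and_false, if_neg, not_false_eq_true] at hx hy
    obtain ⟨rfl, hx0, hy0⟩ := eq_of_sub_code_nonneg hx hy
    refine ⟨rfl, funext fun ⟨j, b⟩ => ?_⟩
    by_cases hj : j = i
    · subst hj
      cases b <;> simpa [encode]
    · simpa [encode, Function.update_of_ne hj] using effect_upd_of_ne hj h b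
  · rintro ⟨rfl, rfl⟩ ⟨j, b⟩
    by_cases hj : j = i
    · subst hj
      cases b <;> simp [encode, upd, ho]
    · simp [encode, upd, hj]

lemma effect_add_code_iff {o : Fin k → Option (Fin s)} {i : Fin k}
    (ho : o i = none) (b : Fin s) {v' : Fin k × Bool → ℕ} :
    (∀ jb, (v' jb : ℤ) = encode o jb +
        upd i ((b.val : ℤ) + 1) ((s - (b.val + 1) : ℕ) : ℤ) jb) ↔
      v' = encode (Function.update o i (some b)) := by
  constructor
  · intro h
    funext ⟨j, c⟩
    by_cases hj : j = i
    · subst hj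
      have := h (j, c)
      cases c <;> simp only [encode, upd, ho, Function.update_self, if_pos, Prod.mk.injEq,
        Bool.false_eq_true, and_false, if_neg, not_false_eq_true]
        at this ⊢ <;> omega
    · simpa [encode, Function.update_of_ne hj] using effect_upd_of_ne hj h c
  · rintro rfl ⟨j, c⟩
    by_cases hj : j = i
    · subst hj
      cases c <;> simp [encode, upd, ho]
    · simp [encode, upd, hj]

section Invariant

variable (δ : Fin k → Fin s → A → Option (Fin s)) (F : Fin k → Finset (Fin s)) (hs : 0 < s)

/-- Inside the `σ`-section, after the gadgets of automata `j < n`. -/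
def SectionInv (σ : A) (n : ℕ) (v : Fin k × Bool → ℕ) : Prop :=
  ∃ st st', JointlyReachable δ hs st ∧
    (∀ j : Fin k, j.val < n → δ j (st j) σ = some (st' j)) ∧
    v = encode (some ∘ mix st st' n)

/-- Inside the checking section, after the gadgets of automata `j < n`. -/
def CheckInv (n : ℕ) (v : Fin k × Bool → ℕ) : Prop :=
  ∃ st, JointlyReachable δ hs st ∧ (∀ j : Fin k, j.val < n → st j ∈ F j) ∧
    v = encode (checked st n)

def RunInv : RSt A k s × (Fin k × Bool → ℕ) → Prop
  | (.p, v) => ∃ st, JointlyReachable δ hs st ∧ v = encode (some ∘ st)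
  | (.secStart σ i, v) => SectionInv δ hs σ i.val v
  | (.secMid σ i a, v) => ∃ st st', JointlyReachable δ hs st ∧
      (∀ j : Fin k, j.val < i.val → δ j (st j) σ = some (st' j)) ∧ a = st i ∧
      v = encode (Function.update (some ∘ mix st st' i.val) i none)
  | (.secEnd σ i, v) => SectionInv δ hs σ (i.val + 1) v
  | (.chkStart i, v) => CheckInv δ F hs i.val v
  | (.chkEnd i, v) => CheckInv δ F hs (i.val + 1) v
  | (.q, _) => ∃ st, JointlyReachable δ hs st ∧ ∀ j, st j ∈ F j

end Invariant

variable {δ : Fin k → Fin s → A → Option (Fin s)} {F : Fin k → Finset (Fin s)} {hs : 0 < s}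

lemma RunInv.step {c c' : RSt A k s} {v v' : Fin k × Bool → ℕ}
    (hstep : RStep δ F (c, v) (c', v')) (hc : RunInv δ F hs (c, v)) :
    RunInv δ F hs (c', v') := by
  obtain ⟨x, htr, heq⟩ := hstep
  dsimp only at heq
  cases htr with
  | toSec σ h =>
    obtain ⟨st, hst, rfl⟩ := hc
    rw [effect_zero_iff.1 heq]
    exact ⟨st, st, hst, fun j hj => absurd hj (Nat.not_lt_zero _), by rw [mix_zero]⟩
  | secIn σ i a b hab =>
    obtain ⟨st, st', hst, hadv, rfl⟩ := hc
    obtain ⟨rfl, rfl⟩ := (effect_sub_code_iff (some_comp_mix_apply_self st st' i) a).1 heq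
    exact ⟨st, st', hst, hadv, rfl, rfl⟩
  | secOut σ i a b hab =>
    obtain ⟨st, st', hst, hadv, rfl, rfl⟩ := hc
    refine ⟨st, Function.update st' i b, hst, fun j hj => ?_, ?_⟩
    · by_cases hji : j = i
      · subst hji
        simpa using hab
      · rw [Function.update_of_ne hji]
        exact hadv j (by have := Fin.val_ne_of_ne hji; omega)
    · rw [(effect_add_code_iff (Function.update_self _ _ _) b).1 heq, Function.update_idem,
        ← update_mix, Function.comp_update]
  | secNext σ i h => rwa [effect_zero_iff.1 heq]
  | secBack σ h =>
    obtain ⟨st, st', hst, hadv, rfl⟩ := hc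
    rw [effect_zero_iff.1 heq]
    exact ⟨st', hst.step σ fun j => hadv j (by dsimp only; omega),
      by rw [mix_of_le (by dsimp only; omega)]⟩
  | toChk h =>
    obtain ⟨st, hst, rfl⟩ := hc
    rw [effect_zero_iff.1 heq]
    exact ⟨st, hst, fun j hj => absurd hj (Nat.not_lt_zero _), by rw [checked_zero]⟩
  | chk i f hf =>
    obtain ⟨st, hst, hF, rfl⟩ := hc
    obtain ⟨rfl, rfl⟩ := (effect_sub_code_iff (checked_apply_self st i) f).1 heq
    refine ⟨st, hst, fun j hj => ?_, by rw [update_checked]⟩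
    rcases Nat.lt_succ_iff_lt_or_eq.1 hj with hj | hj
    · exact hF j hj
    · rwa [Fin.ext hj]
  | chkNext i h => rwa [effect_zero_iff.1 heq]
  | chkDone h =>
    obtain ⟨st, hst, hF, -⟩ := hc
    exact ⟨st, hst, fun j => hF j (by dsimp only; omega)⟩

lemma RunInv.of_reach {c c' : RSt A k s × (Fin k × Bool → ℕ)} (hr : RReach δ F c c')
    (hc : RunInv δ F hs c) : RunInv δ F hs c' := by
  induction hr with
  | refl => exact hc
  | tail _ hstep ih => exact ih.step hstep

lemma RStep.of_zero {c c' : RSt A k s} (h : RTrans δ F c 0 c') (v : Fin k × Bool → ℕ) :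
    RStep δ F (c, v) (c', v) :=
  ⟨0, h, effect_zero_iff.2 rfl⟩

section Simulation

variable {σ : A} {st st' : Fin k → Fin s}

lemma reach_secStart_secEnd (h : ∀ i, δ i (st i) σ = some (st' i)) (i : Fin k) :
    RReach δ F (.secStart σ i, encode (some ∘ mix st st' i.val))
      (.secEnd σ i, encode (some ∘ mix st st' (i.val + 1))) := by
  have hin : RStep δ F (.secStart σ i, encode (some ∘ mix st st' i.val))
      (.secMid σ i (st i), encode (Function.update (some ∘ mix st st' i.val) i none)) :=
    ⟨_, .secIn σ i (st i) (st' i) (h i),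
      (effect_sub_code_iff (some_comp_mix_apply_self st st' i) _).2 ⟨rfl, rfl⟩⟩
  have hout : RStep δ F
      (.secMid σ i (st i), encode (Function.update (some ∘ mix st st' i.val) i none))
      (.secEnd σ i, encode (some ∘ mix st st' (i.val + 1))) :=
    ⟨_, .secOut σ i (st i) (st' i) (h i),
      (effect_add_code_iff (Function.update_self _ _ _) _).2 (by
        rw [Function.update_idem, ← Function.comp_update, update_mix, Function.update_eq_self])⟩
  exact .head hin (.single hout)

lemma reach_secEnd (h : ∀ i, δ i (st i) σ = some (st' i)) :
    ∀ n (hn : n < k), RReach δ F (.p, encode (some ∘ st))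
      (.secEnd σ ⟨n, hn⟩, encode (some ∘ mix st st' (n + 1)))
  | 0, hn => by
    have := reach_secStart_secEnd (F := F) h ⟨0, hn⟩
    rw [Fin.val_mk, mix_zero] at this
    exact .head (RStep.of_zero (.toSec σ hn) _) this
  | n + 1, hn => (reach_secEnd h n (by omega)).trans
      (.head (RStep.of_zero (.secNext σ ⟨n, by omega⟩ hn) _)
        (reach_secStart_secEnd h ⟨n + 1, hn⟩))

lemma reach_of_letter (hk : 0 < k) (h : ∀ i, δ i (st i) σ = some (st' i)) :
    RReach δ F (.p, encode (some ∘ st)) (.p, encode (some ∘ st')) := by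
  have := reach_secEnd (F := F) h (k - 1) (by omega)
  rw [mix_of_le (by omega)] at this
  exact this.tail (RStep.of_zero (.secBack σ hk) _)

end Simulation

lemma reach_of_run (hk : 0 < k) (w : List A) {st stf : Fin k → Fin s}
    (hrun : ∀ i, dfaRun (δ i) (st i) w = some (stf i)) :
    RReach δ F (.p, encode (some ∘ st)) (.p, encode (some ∘ stf)) := by
  induction w generalizing st with
  | nil =>
    obtain rfl : st = stf := funext fun i => by simpa [dfaRun] using hrun i
    exact .refl
  | cons σ w ih =>
    have hstep (i : Fin k) :
        ∃ b, δ i (st i) σ = some b ∧ dfaRun (δ i) b w = some (stf i) := by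
      simpa [dfaRun, Option.bind_eq_some_iff] using hrun i
    choose st' hδ hrun' using hstep
    exact (reach_of_letter hk hδ).trans (ih hrun')

section Check

variable {st : Fin k → Fin s} (hF : ∀ j, st j ∈ F j)
include hF

lemma step_chkStart_chkEnd (i : Fin k) :
    RStep δ F (.chkStart i, encode (checked st i.val))
      (.chkEnd i, encode (checked st (i.val + 1))) :=
  ⟨_, .chk i (st i) (hF i),
    (effect_sub_code_iff (checked_apply_self st i) _).2 ⟨rfl, by rw [update_checked]⟩⟩

lemma reach_chkEnd : ∀ n (hn : n < k),
    RReach δ F (.p, encode (some ∘ st)) (.chkEnd ⟨n, hn⟩, encode (checked st (n + 1)))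
  | 0, hn => by
    have := step_chkStart_chkEnd (δ := δ) hF ⟨0, hn⟩
    rw [Fin.val_mk, checked_zero] at this
    exact .head (RStep.of_zero (.toChk hn) _) (.single this)
  | n + 1, hn => (reach_chkEnd n (by omega)).trans
      (.head (RStep.of_zero (.chkNext ⟨n, by omega⟩ hn) _)
        (.single (step_chkStart_chkEnd hF ⟨n + 1, hn⟩)))

lemma reach_q (hk : 0 < k) :
    RReach δ F (.p, encode (some ∘ st)) (.q, encode (checked st k)) := by
  have := reach_chkEnd (δ := δ) hF (k - 1) (by omega)
  rw [Nat.sub_add_cancel hk] at this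
  exact this.tail (RStep.of_zero (.chkDone hk) _)

end Check

end DFAReduction

/-- Correctness of the DFA-intersection-to-VASS-coverability reduction: some word is
accepted by all DFAs iff the constructed VASS has a run from `p(u)` (with `x_i = 1`,
`y_i = s - 1`) to some configuration with state `q`. -/
theorem reduction_correct {A : Type} {k s : ℕ}
    (δ : Fin k → Fin s → A → Option (Fin s)) (F : Fin k → Finset (Fin s))
    (hk : 0 < k) (hs : 0 < s) :
    (∃ w : List A, ∀ i : Fin k, ∃ qf ∈ F i, dfaRun (δ i) ⟨0, hs⟩ w = some qf) ↔
      ∃ z : Fin k × Bool → ℕ, RReach δ F (.p, initCnt k s) (.q, z) := by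
  rw [DFAReduction.initCnt_eq_encode hs]
  constructor
  · rintro ⟨w, hw⟩
    choose stf hF hrun using hw
    exact ⟨_, (DFAReduction.reach_of_run hk w (st := fun _ => ⟨0, hs⟩) hrun).trans
      (DFAReduction.reach_q hF hk)⟩
  · rintro ⟨z, hr⟩
    obtain ⟨st, ⟨w, hw⟩, hF⟩ :=
      DFAReduction.RunInv.of_reach hr ⟨fun _ => ⟨0, hs⟩, ⟨[], fun _ => rfl⟩, rfl⟩
    exact ⟨w, fun i => ⟨st i, hF i, hw i⟩⟩
end
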